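/- Let M be an open subset of ℝⁿ, H : [0,T] × M × ℝⁿ → ℝ a C¹ Hamiltonian, C : M → ℝ a C¹ function, and p₁ := ∇C (so p₁(q) = dC(q)). For C¹ curves (q,p) with q(0) = q₀, define 𝒥[q,p] := C(q(T)) − S[q,p] where S[q,p] = ∫₀ᵀ(⟨p,q̇⟩ − H(t,q,p)) dt. Then 𝒥 is stationary under all partial variations (δq(0) = 0) if and only if the free boundary Type II d'Alembert principle δS[q,p] = ⟨dC(q(T)), δq(T)⟩ holds for all partial variations; equivalently, if and only if q̇ = D_p H, ṗ = −D_q H on (0,T) and p(T) = dC(q(T)). -/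

import Mathlib

open Set

/-- The classical Hamiltonian phase space action
`S[q,p] = ∫₀ᵀ (⟨p(t), q̇(t)⟩ − H(t,q(t),p(t))) dt`. -/
noncomputable def classicalAction (n : ℕ) (T : ℝ)
    (H : ℝ → (Fin n → ℝ) → (Fin n → ℝ) → ℝ) (q p : ℝ → (Fin n → ℝ)) : ℝ :=
  ∫ t in (0 : ℝ)..T, ((∑ i, p t i * deriv q t i) - H t (q t) (p t))

/-- The gradient of `C`, i.e. the section `p₁ = dC`. -/
noncomputable def gradOf (n : ℕ) (C : (Fin n → ℝ) → ℝ) : (Fin n → ℝ) → (Fin n → ℝ) :=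
  fun x i => fderiv ℝ C x (Pi.single i 1)

/-!
Differentiating under the integral sign and integrating `⟨p, δq̇⟩` by parts gives, for `δq(0) = 0`,
`δS = ⟨p(T), δq(T)⟩ + ∫₀ᵀ (⟨q̇ - ∂ₚH, δp⟩ - ⟨ṗ + ∂_qH, δq⟩) dt`, while the variation of `C(q(T))`
is `⟨dC(q(T)), δq(T)⟩`; so stationarity of `𝒥` is literally the d'Alembert identity. Variations
vanishing at both ends and the fundamental lemma of the calculus of variations give Hamilton's
equations on `(0, T)`. The integral then vanishes for every variation, and the variation
`δq(t) = (t / T) (p(T) - dC(q(T)))` forces the free boundary condition.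
-/

open MeasureTheory

theorem hasDerivAt_intervalIntegral_of_continuous_deriv {E : Type*} [NormedAddCommGroup E]
    [NormedSpace ℝ E] {F F' : ℝ → ℝ → E} {a b x₀ : ℝ} (hF : ∀ x, Continuous (F x))
    (hF' : Continuous (Function.uncurry F')) (hderiv : ∀ x t, HasDerivAt (F · t) (F' x t) x) :
    HasDerivAt (fun x => ∫ t in a..b, F x t) (∫ t in a..b, F' x₀ t) x₀ := by
  obtain ⟨M, hM⟩ := ((isCompact_closedBall x₀ 1).prod (isCompact_uIcc (a := a) (b := b)))
    |>.exists_bound_of_continuousOn hF'.continuousOn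
  refine (intervalIntegral.hasDerivAt_integral_of_dominated_loc_of_deriv_le
    (bound := fun _ => M) (Metric.closedBall_mem_nhds x₀ one_pos)
    (.of_forall fun x => (hF x).aestronglyMeasurable) ((hF x₀).intervalIntegrable a b)
    (hF'.comp (Continuous.prodMk_right x₀)).aestronglyMeasurable
    (.of_forall fun t ht x hx => hM (x, t) ⟨hx, uIoc_subset_uIcc ht⟩)
    intervalIntegrable_const (.of_forall fun t _ x _ => hderiv x t)).2

theorem HasDerivAt.dotProduct {n : Type*} [Fintype n] {f g : ℝ → n → ℝ} {f' g' : n → ℝ} {x : ℝ}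
    (hf : HasDerivAt f f' x) (hg : HasDerivAt g g' x) :
    HasDerivAt (fun y => f y ⬝ᵥ g y) (f' ⬝ᵥ g x + f x ⬝ᵥ g') x := by
  simp only [_root_.dotProduct]
  rw [← Finset.sum_add_distrib]
  exact .fun_sum fun i _ => (hasDerivAt_pi.1 hf i).mul (hasDerivAt_pi.1 hg i)

theorem eqOn_zero_of_forall_intervalIntegral_mul_eq_zero {g : ℝ → ℝ} {a b : ℝ}
    (hg : Continuous g)
    (h : ∀ φ : ℝ → ℝ, ContDiff ℝ 1 φ → φ a = 0 → φ b = 0 → ∫ t in a..b, g t * φ t = 0) :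
    EqOn g 0 (Ioo a b) := by
  rcases le_or_gt b a with hba | hab
  · simp [Ioo_eq_empty hba.not_gt]
  have hae : ∀ᵐ t, t ∈ Ioo a b → g t = 0 := by
    refine isOpen_Ioo.ae_eq_zero_of_integral_contDiff_smul_eq_zero
      (hg.locallyIntegrable.locallyIntegrableOn _) fun φ hφ _ hsupp => ?_
    have hφ_zero : ∀ t ∉ Ioo a b, φ t = 0 := fun t ht =>
      image_eq_zero_of_notMem_tsupport fun h => ht (hsupp h)
    rw [← setIntegral_eq_integral_of_forall_compl_eq_zero (s := Ioc a b) fun t ht => by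
      simp [hφ_zero t fun h => ht (Ioo_subset_Ioc_self h)],
      ← intervalIntegral.integral_of_le hab.le]
    simpa only [smul_eq_mul, mul_comm] using h φ (hφ.of_le (by simp))
      (hφ_zero a left_notMem_Ioo) (hφ_zero b right_notMem_Ioo)
  exact Measure.eqOn_Ioo_of_ae_eq volume ((ae_restrict_iff' measurableSet_Ioo).2 hae)
    hg.continuousOn continuousOn_const

theorem eqOn_zero_of_forall_intervalIntegral_dotProduct_eq_zero {ι : Type*} [Fintype ι]
    [DecidableEq ι] {g : ℝ → ι → ℝ} {a b : ℝ} (hg : Continuous g)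
    (h : ∀ φ : ℝ → ι → ℝ, ContDiff ℝ 1 φ → φ a = 0 → φ b = 0 →
      ∫ t in a..b, g t ⬝ᵥ φ t = 0) :
    EqOn g 0 (Ioo a b) := fun t ht => funext fun i =>
  eqOn_zero_of_forall_intervalIntegral_mul_eq_zero (continuous_apply i |>.comp hg)
    (fun φ hφ hφa hφb => by
      simpa [dotProduct_smul, dotProduct_single_one, mul_comm, hφa, hφb] using
        h (fun t => φ t • Pi.single i 1) (hφ.smul contDiff_const)) ht

section PartialDerivatives

variable {𝕜 A B C G : Type*} [NontriviallyNormedField 𝕜] [NormedAddCommGroup A] [NormedSpace 𝕜 A]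
  [NormedAddCommGroup B] [NormedSpace 𝕜 B] [NormedAddCommGroup C] [NormedSpace 𝕜 C]
  [NormedAddCommGroup G] [NormedSpace 𝕜 G] {f : A × B × C → G} {a : A} {b : B} {c : C}

theorem fderiv_apply_zero_mk (hf : DifferentiableAt 𝕜 f (a, b, c)) (u : B) (w : C) :
    fderiv 𝕜 f (a, b, c) (0, u, w)
      = fderiv 𝕜 (fun y => f (a, y, c)) b u + fderiv 𝕜 (fun z => f (a, b, z)) c w := by
  have hmid : HasFDerivAt (fun y => f (a, y, c))
      ((fderiv 𝕜 f (a, b, c)).comp ((ContinuousLinearMap.inr 𝕜 A (B × C)).comp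
        (ContinuousLinearMap.inl 𝕜 B C))) b :=
    hf.hasFDerivAt.comp b ((hasFDerivAt_prodMk_right a _).comp b (hasFDerivAt_prodMk_left b c))
  have hlast : HasFDerivAt (fun z => f (a, b, z))
      ((fderiv 𝕜 f (a, b, c)).comp ((ContinuousLinearMap.inr 𝕜 A (B × C)).comp
        (ContinuousLinearMap.inr 𝕜 B C))) c :=
    hf.hasFDerivAt.comp c ((hasFDerivAt_prodMk_right a _).comp c (hasFDerivAt_prodMk_right b c))
  rw [hmid.fderiv, hlast.fderiv]
  simp only [ContinuousLinearMap.comp_apply, ContinuousLinearMap.inl_apply,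
    ContinuousLinearMap.inr_apply, ← map_add, Prod.mk_add_mk, add_zero, zero_add]

end PartialDerivatives

theorem hasDerivAt_const_add_smul {E : Type*} [NormedAddCommGroup E] [NormedSpace ℝ E]
    (u v : E) (x : ℝ) : HasDerivAt (fun ε : ℝ => u + ε • v) v x := by
  simpa using ((hasDerivAt_id x).smul_const v).const_add u

theorem integral_deriv_dotProduct_eq_sub {ι : Type*} [Fintype ι] {f g : ℝ → ι → ℝ} {a b : ℝ}
    (hf : ContDiff ℝ 1 f) (hg : ContDiff ℝ 1 g) :
    ∫ t in a..b, (deriv f t ⬝ᵥ g t + f t ⬝ᵥ deriv g t) = f b ⬝ᵥ g b - f a ⬝ᵥ g a := by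
  have := hf.continuous_deriv le_rfl
  have := hg.continuous_deriv le_rfl
  have := hf.continuous
  have := hg.continuous
  exact intervalIntegral.integral_eq_sub_of_hasDerivAt
    (fun t _ => ((hf.differentiable one_ne_zero t).hasDerivAt).dotProduct
      (hg.differentiable one_ne_zero t).hasDerivAt)
    (Continuous.intervalIntegrable (by fun_prop) _ _)

section HamiltonianAction

variable {n : ℕ} {H : ℝ → (Fin n → ℝ) → (Fin n → ℝ) → ℝ} {q p δq δp : ℝ → Fin n → ℝ}

theorem fderiv_apply_eq_gradOf_dotProduct (f : (Fin n → ℝ) → ℝ) (x v : Fin n → ℝ) :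
    fderiv ℝ f x v = gradOf n f x ⬝ᵥ v := by
  conv_lhs => rw [pi_eq_sum_univ' v]
  simp [gradOf, dotProduct, mul_comm]

theorem hasDerivAt_comp_add_smul {f : (Fin n → ℝ) → ℝ} {x : Fin n → ℝ}
    (hf : DifferentiableAt ℝ f x) (v : Fin n → ℝ) :
    HasDerivAt (fun ε : ℝ => f (x + ε • v)) (gradOf n f x ⬝ᵥ v) 0 := by
  rw [← fderiv_apply_eq_gradOf_dotProduct]
  exact hf.hasFDerivAt.comp_hasDerivAt_of_eq 0 (hasDerivAt_const_add_smul x v 0) (by simp)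

noncomputable def hamiltonGradQ (H : ℝ → (Fin n → ℝ) → (Fin n → ℝ) → ℝ) (q p : ℝ → Fin n → ℝ)
    (t : ℝ) : Fin n → ℝ :=
  gradOf n (fun q' => H t q' (p t)) (q t)

noncomputable def hamiltonGradP (H : ℝ → (Fin n → ℝ) → (Fin n → ℝ) → ℝ) (q p : ℝ → Fin n → ℝ)
    (t : ℝ) : Fin n → ℝ :=
  gradOf n (fun p' => H t (q t) p') (p t)

theorem fderiv_hamiltonian_apply_zero
    (hH : Differentiable ℝ fun x : ℝ × (Fin n → ℝ) × (Fin n → ℝ) => H x.1 x.2.1 x.2.2)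
    (t : ℝ) (u w : Fin n → ℝ) :
    fderiv ℝ (fun x : ℝ × (Fin n → ℝ) × (Fin n → ℝ) => H x.1 x.2.1 x.2.2) (t, q t, p t) (0, u, w)
      = hamiltonGradQ H q p t ⬝ᵥ u + hamiltonGradP H q p t ⬝ᵥ w := by
  rw [fderiv_apply_zero_mk (hH _), fderiv_apply_eq_gradOf_dotProduct,
    fderiv_apply_eq_gradOf_dotProduct]
  rfl

theorem continuous_hamiltonGradQ
    (hH : ContDiff ℝ 1 fun x : ℝ × (Fin n → ℝ) × (Fin n → ℝ) => H x.1 x.2.1 x.2.2)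
    (hq : Continuous q) (hp : Continuous p) : Continuous (hamiltonGradQ H q p) := by
  have hD : Continuous fun t => fderiv ℝ (fun x : ℝ × (Fin n → ℝ) × (Fin n → ℝ) =>
      H x.1 x.2.1 x.2.2) (t, q t, p t) := (hH.continuous_fderiv one_ne_zero).comp (by fun_prop)
  refine continuous_pi fun i =>
    (hD.clm_apply (continuous_const (y := ((0 : ℝ), Pi.single i 1, 0)))).congr fun t => ?_
  simp [fderiv_hamiltonian_apply_zero (hH.differentiable one_ne_zero) t (Pi.single i 1) 0]

theorem continuous_hamiltonGradP
    (hH : ContDiff ℝ 1 fun x : ℝ × (Fin n → ℝ) × (Fin n → ℝ) => H x.1 x.2.1 x.2.2)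
    (hq : Continuous q) (hp : Continuous p) : Continuous (hamiltonGradP H q p) := by
  have hD : Continuous fun t => fderiv ℝ (fun x : ℝ × (Fin n → ℝ) × (Fin n → ℝ) =>
      H x.1 x.2.1 x.2.2) (t, q t, p t) := (hH.continuous_fderiv one_ne_zero).comp (by fun_prop)
  refine continuous_pi fun i =>
    (hD.clm_apply (continuous_const (y := ((0 : ℝ), 0, Pi.single i 1)))).congr fun t => ?_
  simp [fderiv_hamiltonian_apply_zero (hH.differentiable one_ne_zero) t 0 (Pi.single i 1)]

noncomputable def actionVariationDensity (H : ℝ → (Fin n → ℝ) → (Fin n → ℝ) → ℝ)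
    (q p δq δp : ℝ → Fin n → ℝ) (t : ℝ) : ℝ :=
  (deriv q t - hamiltonGradP H q p t) ⬝ᵥ δp t - (deriv p t + hamiltonGradQ H q p t) ⬝ᵥ δq t

theorem classicalAction_add_smul (hq : Differentiable ℝ q) (hδq : Differentiable ℝ δq)
    (T ε : ℝ) :
    classicalAction n T H (fun t => q t + ε • δq t) (fun t => p t + ε • δp t)
      = ∫ t in 0..T, ((p t + ε • δp t) ⬝ᵥ (deriv q t + ε • deriv δq t)
          - H t (q t + ε • δq t) (p t + ε • δp t)) := by
  refine intervalIntegral.integral_congr fun t _ => ?_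
  have hd : HasDerivAt (fun s => q s + ε • δq s) (deriv q t + ε • deriv δq t) t :=
    (hq t).hasDerivAt.add ((hδq t).hasDerivAt.const_smul ε)
  rw [hd.deriv]
  rfl

theorem hasDerivAt_classicalAction_add_smul
    (hH : ContDiff ℝ 1 fun x : ℝ × (Fin n → ℝ) × (Fin n → ℝ) => H x.1 x.2.1 x.2.2)
    (hq : ContDiff ℝ 1 q) (hp : ContDiff ℝ 1 p) (hδq : ContDiff ℝ 1 δq) (hδp : ContDiff ℝ 1 δp)
    (T : ℝ) :
    HasDerivAt (fun ε : ℝ =>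
        classicalAction n T H (fun t => q t + ε • δq t) (fun t => p t + ε • δp t))
      (∫ t in 0..T, (δp t ⬝ᵥ deriv q t + p t ⬝ᵥ deriv δq t
        - fderiv ℝ (fun x : ℝ × (Fin n → ℝ) × (Fin n → ℝ) => H x.1 x.2.1 x.2.2)
            (t, q t, p t) (0, δq t, δp t))) 0 := by
  have := hH.continuous
  have := hH.continuous_fderiv one_ne_zero
  have := hq.continuous
  have := hp.continuous
  have := hδq.continuous
  have := hδp.continuous
  have := hq.continuous_deriv le_rfl
  have := hδq.continuous_deriv le_rfl
  rw [funext (classicalAction_add_smul (H := H) (p := p) (δp := δp)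
    (hq.differentiable one_ne_zero) (hδq.differentiable one_ne_zero) T)]
  simpa using hasDerivAt_intervalIntegral_of_continuous_deriv (a := 0) (b := T) (x₀ := 0)
    (F' := fun ε t => δp t ⬝ᵥ (deriv q t + ε • deriv δq t) + (p t + ε • δp t) ⬝ᵥ deriv δq t
      - fderiv ℝ (fun x : ℝ × (Fin n → ℝ) × (Fin n → ℝ) => H x.1 x.2.1 x.2.2)
          (t, q t + ε • δq t, p t + ε • δp t) (0, δq t, δp t))
    (fun ε => by fun_prop) (by fun_prop) fun ε t =>
      ((hasDerivAt_const_add_smul _ _ ε).dotProduct (hasDerivAt_const_add_smul _ _ ε)).sub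
        ((hH.differentiable one_ne_zero _).hasFDerivAt.comp_hasDerivAt ε
          ((hasDerivAt_const ε t).prodMk
            ((hasDerivAt_const_add_smul _ _ ε).prodMk (hasDerivAt_const_add_smul _ _ ε))))

theorem integral_variation_eq_add_integral_actionVariationDensity
    (hH : ContDiff ℝ 1 fun x : ℝ × (Fin n → ℝ) × (Fin n → ℝ) => H x.1 x.2.1 x.2.2)
    (hq : ContDiff ℝ 1 q) (hp : ContDiff ℝ 1 p) (hδq : ContDiff ℝ 1 δq) (hδp : Continuous δp)
    (T : ℝ) :
    ∫ t in 0..T, (δp t ⬝ᵥ deriv q t + p t ⬝ᵥ deriv δq t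
        - fderiv ℝ (fun x : ℝ × (Fin n → ℝ) × (Fin n → ℝ) => H x.1 x.2.1 x.2.2)
            (t, q t, p t) (0, δq t, δp t))
      = p T ⬝ᵥ δq T - p 0 ⬝ᵥ δq 0 + ∫ t in 0..T, actionVariationDensity H q p δq δp t := by
  have := hp.continuous
  have := hδq.continuous
  have := hq.continuous_deriv le_rfl
  have := hp.continuous_deriv le_rfl
  have := hδq.continuous_deriv le_rfl
  have := continuous_hamiltonGradP hH hq.continuous hp.continuous
  have := continuous_hamiltonGradQ hH hq.continuous hp.continuous
  rw [← integral_deriv_dotProduct_eq_sub hp hδq, ← intervalIntegral.integral_add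
    (Continuous.intervalIntegrable (by fun_prop) _ _)
    (Continuous.intervalIntegrable (by unfold actionVariationDensity; fun_prop) _ _)]
  refine intervalIntegral.integral_congr fun t _ => ?_
  simp only [fderiv_hamiltonian_apply_zero (hH.differentiable one_ne_zero),
    actionVariationDensity, sub_dotProduct, add_dotProduct, dotProduct_comm (δp t)]
  ring

def HamiltonEqOn (H : ℝ → (Fin n → ℝ) → (Fin n → ℝ) → ℝ) (q p : ℝ → Fin n → ℝ) (s : Set ℝ) :
    Prop :=
  ∀ t ∈ s, deriv q t = hamiltonGradP H q p t ∧ deriv p t = -hamiltonGradQ H q p t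

theorem HamiltonEqOn.integral_actionVariationDensity_eq_zero {T : ℝ}
    (hHam : HamiltonEqOn H q p (Ioo 0 T)) (hT : 0 ≤ T) :
    ∫ t in 0..T, actionVariationDensity H q p δq δp t = 0 := by
  rw [intervalIntegral.integral_of_le hT, integral_Ioc_eq_integral_Ioo]
  refine setIntegral_eq_zero_of_forall_eq_zero fun t ht => ?_
  obtain ⟨hq', hp'⟩ := hHam t ht
  simp [actionVariationDensity, hq', hp']

theorem hamiltonEqOn_of_forall_integral_actionVariationDensity_eq_zero {T : ℝ}
    (hH : ContDiff ℝ 1 fun x : ℝ × (Fin n → ℝ) × (Fin n → ℝ) => H x.1 x.2.1 x.2.2)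
    (hq : ContDiff ℝ 1 q) (hp : ContDiff ℝ 1 p)
    (h : ∀ δq δp : ℝ → Fin n → ℝ, ContDiff ℝ 1 δq → ContDiff ℝ 1 δp → δq 0 = 0 → δq T = 0 →
      ∫ t in 0..T, actionVariationDensity H q p δq δp t = 0) :
    HamiltonEqOn H q p (Ioo 0 T) := by
  have := hq.continuous_deriv le_rfl
  have := hp.continuous_deriv le_rfl
  have := continuous_hamiltonGradP hH hq.continuous hp.continuous
  have := continuous_hamiltonGradQ hH hq.continuous hp.continuous
  have hq_res : EqOn (fun t => deriv q t - hamiltonGradP H q p t) 0 (Ioo 0 T) :=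
    eqOn_zero_of_forall_intervalIntegral_dotProduct_eq_zero (by fun_prop) fun δp hδp _ _ => by
      simpa [actionVariationDensity] using h 0 δp contDiff_const hδp rfl rfl
  have hp_res : EqOn (fun t => deriv p t + hamiltonGradQ H q p t) 0 (Ioo 0 T) :=
    eqOn_zero_of_forall_intervalIntegral_dotProduct_eq_zero (by fun_prop) fun δq hδq h0 hT => by
      simpa only [actionVariationDensity, Pi.zero_apply, dotProduct_zero, zero_sub,
        intervalIntegral.integral_neg, neg_eq_zero] using h δq 0 hδq contDiff_const h0 hT
  exact fun t ht => ⟨sub_eq_zero.1 (hq_res ht), eq_neg_of_add_eq_zero_left (hp_res ht)⟩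

theorem forall_dAlembert_iff_hamiltonEqOn_and_eq {T : ℝ} (hT : 0 < T)
    (hH : ContDiff ℝ 1 fun x : ℝ × (Fin n → ℝ) × (Fin n → ℝ) => H x.1 x.2.1 x.2.2)
    (hq : ContDiff ℝ 1 q) (hp : ContDiff ℝ 1 p) (g : Fin n → ℝ) :
    (∀ δq δp : ℝ → Fin n → ℝ, ContDiff ℝ 1 δq → ContDiff ℝ 1 δp → δq 0 = 0 →
      p T ⬝ᵥ δq T + ∫ t in 0..T, actionVariationDensity H q p δq δp t = g ⬝ᵥ δq T) ↔
    HamiltonEqOn H q p (Ioo 0 T) ∧ p T = g := by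
  constructor
  · intro h
    have hHam : HamiltonEqOn H q p (Ioo 0 T) :=
      hamiltonEqOn_of_forall_integral_actionVariationDensity_eq_zero hH hq hp
        fun δq δp hδq hδp h0 hT => by simpa [hT] using h δq δp hδq hδp h0
    refine ⟨hHam, ?_⟩
    have hv := h (fun t => (t / T) • (p T - g)) 0 (by fun_prop) contDiff_const (by simp)
    rw [hHam.integral_actionVariationDensity_eq_zero hT.le, add_zero, div_self hT.ne', one_smul,
      ← sub_eq_zero, ← sub_dotProduct] at hv
    exact sub_eq_zero.1 (dotProduct_self_eq_zero.1 hv)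
  · rintro ⟨hHam, rfl⟩ δq δp _ _ _
    rw [hHam.integral_actionVariationDensity_eq_zero hT.le, add_zero]

end HamiltonianAction

theorem free_boundary_typeII_dAlembert_stationarity_general
    (n : ℕ) (T : ℝ) (hT : 0 < T)
    (H : ℝ → (Fin n → ℝ) → (Fin n → ℝ) → ℝ)
    (hH : ContDiff ℝ 1 (fun x : ℝ × (Fin n → ℝ) × (Fin n → ℝ) => H x.1 x.2.1 x.2.2))
    (C : (Fin n → ℝ) → ℝ) (hC : ContDiff ℝ 1 C)
    (q p : ℝ → (Fin n → ℝ)) (hq : ContDiff ℝ 1 q) (hp : ContDiff ℝ 1 p) :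
    ((∀ δq δp : ℝ → (Fin n → ℝ), ContDiff ℝ 1 δq → ContDiff ℝ 1 δp → δq 0 = 0 →
        deriv (fun ε : ℝ => C (q T + ε • δq T)
            - classicalAction n T H (fun t => q t + ε • δq t) (fun t => p t + ε • δp t)) 0
          = 0)
      ↔ (∀ δq δp : ℝ → (Fin n → ℝ), ContDiff ℝ 1 δq → ContDiff ℝ 1 δp → δq 0 = 0 →
        deriv (fun ε : ℝ =>
            classicalAction n T H (fun t => q t + ε • δq t) (fun t => p t + ε • δp t)) 0
          = ∑ i, gradOf n C (q T) i * δq T i)) ∧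
    ((∀ δq δp : ℝ → (Fin n → ℝ), ContDiff ℝ 1 δq → ContDiff ℝ 1 δp → δq 0 = 0 →
        deriv (fun ε : ℝ => C (q T + ε • δq T)
            - classicalAction n T H (fun t => q t + ε • δq t) (fun t => p t + ε • δp t)) 0
          = 0)
      ↔ ((∀ t ∈ Ioo (0 : ℝ) T,
            deriv q t = (fun i => fderiv ℝ (fun p' => H t (q t) p') (p t) (Pi.single i 1)) ∧
            deriv p t = (fun i => -fderiv ℝ (fun q' => H t q' (p t)) (q t) (Pi.single i 1)))
          ∧ p T = gradOf n C (q T))) := by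
  have hδS : ∀ δq δp : ℝ → Fin n → ℝ, ContDiff ℝ 1 δq → ContDiff ℝ 1 δp → δq 0 = 0 →
      HasDerivAt (fun ε : ℝ =>
          classicalAction n T H (fun t => q t + ε • δq t) (fun t => p t + ε • δp t))
        (p T ⬝ᵥ δq T + ∫ t in 0..T, actionVariationDensity H q p δq δp t) 0 :=
    fun δq δp hδq hδp hδq0 => by
      simpa [integral_variation_eq_add_integral_actionVariationDensity hH hq hp hδq hδp.continuous,
        hδq0] using hasDerivAt_classicalAction_add_smul hH hq hp hδq hδp T
  have hstationary_iff_dAlembert : ∀ δq δp : ℝ → Fin n → ℝ, ContDiff ℝ 1 δq →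
      ContDiff ℝ 1 δp → δq 0 = 0 →
      (deriv (fun ε : ℝ => C (q T + ε • δq T)
          - classicalAction n T H (fun t => q t + ε • δq t) (fun t => p t + ε • δp t)) 0 = 0 ↔
        p T ⬝ᵥ δq T + ∫ t in 0..T, actionVariationDensity H q p δq δp t
          = gradOf n C (q T) ⬝ᵥ δq T) := fun δq δp hδq hδp hδq0 => by
    rw [((hasDerivAt_comp_add_smul (hC.differentiable one_ne_zero _) (δq T)).fun_sub
      (hδS δq δp hδq hδp hδq0)).deriv, sub_eq_zero, eq_comm]
  constructor
  · refine forall₅_congr fun δq δp hδq hδp hδq0 => ?_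
    rw [hstationary_iff_dAlembert δq δp hδq hδp hδq0, (hδS δq δp hδq hδp hδq0).deriv]
    rfl
  · rw [forall₅_congr hstationary_iff_dAlembert]
    exact forall_dAlembert_iff_hamiltonEqOn_and_eq hT hH hq hp _

/-- With `p₁ = dC` exact, stationarity of `𝒥[q,p] = C(q(T)) − S[q,p]`
under all partial variations (`δq(0) = 0`) is equivalent to the free boundary Type II
d'Alembert principle `δS[q,p] = ⟨dC(q(T)), δq(T)⟩`, and also equivalent to Hamilton's
equations on `(0,T)` together with the free boundary condition `p(T) = dC(q(T))`. -/
theorem free_boundary_typeII_dAlembert_stationarity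
    (n : ℕ) (T : ℝ) (hT : 0 < T)
    (H : ℝ → (Fin n → ℝ) → (Fin n → ℝ) → ℝ)
    (hH : ContDiff ℝ 1 (fun x : ℝ × (Fin n → ℝ) × (Fin n → ℝ) => H x.1 x.2.1 x.2.2))
    (C : (Fin n → ℝ) → ℝ) (hC : ContDiff ℝ 1 C)
    (q p : ℝ → (Fin n → ℝ)) (hq : ContDiff ℝ 1 q) (hp : ContDiff ℝ 1 p)
    (q₀ : Fin n → ℝ) (hq0 : q 0 = q₀) :
    ((∀ δq δp : ℝ → (Fin n → ℝ), ContDiff ℝ 1 δq → ContDiff ℝ 1 δp → δq 0 = 0 →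
        deriv (fun ε : ℝ => C (q T + ε • δq T)
            - classicalAction n T H (fun t => q t + ε • δq t) (fun t => p t + ε • δp t)) 0
          = 0)
      ↔ (∀ δq δp : ℝ → (Fin n → ℝ), ContDiff ℝ 1 δq → ContDiff ℝ 1 δp → δq 0 = 0 →
        deriv (fun ε : ℝ =>
            classicalAction n T H (fun t => q t + ε • δq t) (fun t => p t + ε • δp t)) 0
          = ∑ i, gradOf n C (q T) i * δq T i)) ∧
    ((∀ δq δp : ℝ → (Fin n → ℝ), ContDiff ℝ 1 δq → ContDiff ℝ 1 δp → δq 0 = 0 →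
        deriv (fun ε : ℝ => C (q T + ε • δq T)
            - classicalAction n T H (fun t => q t + ε • δq t) (fun t => p t + ε • δp t)) 0
          = 0)
      ↔ ((∀ t ∈ Ioo (0 : ℝ) T,
            deriv q t = (fun i => fderiv ℝ (fun p' => H t (q t) p') (p t) (Pi.single i 1)) ∧
            deriv p t = (fun i => -fderiv ℝ (fun q' => H t q' (p t)) (q t) (Pi.single i 1)))
          ∧ p T = gradOf n C (q T))) :=
  free_boundary_typeII_dAlembert_stationarity_general n T hT H hH C hC q p hq hp
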